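/- arXiv:1902.04022 — 4 statements merged into one kernel-verified Lean document; each statement's English description precedes it below -/
import Mathlib

section
/- Let m ≥ 1, let R be a symmetric m×m integer matrix, and let v, w ∈ {0,1}^m. Define η(v; R, w) := [(v + w) − (v ∗ w)] R (v ∗ w)^T over ℤ. Then η(v; R, w) = v [D_{w̄} R D_w + D_{w R D_w}] v^T = v [D_w R D_{w̄} + D_{w R D_w}] v^T, where for an integer row vector x, D_x denotes the diagonal matrix diag(x), w̄ := 𝟙 − w with 𝟙 the all-ones vector, and w R D_w is the row vector obtained by right-multiplying w by R D_w. -/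
open Complex Matrix

namespace CliffordHierarchy

noncomputable section

variable {ι : Type*} [Fintype ι] [DecidableEq ι]

/-- Embed a binary vector (entries in `ZMod 2`) into ℤ as a 0/1 vector. -/
def toZ (v : ι → ZMod 2) : ι → ℤ := fun i => ((v i).val : ℤ)

/-- Reduce an integer vector mod 2, viewed in `ZMod 2`. -/
def red2 (a : ι → ℤ) : ι → ZMod 2 := fun i => ((a i : ZMod 2))

/-- Dot product of integer row vectors, over ℤ. -/
def dotZ (x y : ι → ℤ) : ℤ := ∑ i, x i * y i

/-- Bilinear form `x R yᵀ` over ℤ. -/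
def bil (R : Matrix ι ι ℤ) (x y : ι → ℤ) : ℤ := ∑ i, ∑ j, x i * R i j * y j

/-- η(v; R, w) = [(v + w) − (v ∗ w)] R (v ∗ w)ᵀ, with ∗ the entrywise product. -/
def eta (R : Matrix ι ι ℤ) (v w : ι → ℤ) : ℤ := bil R (v + w - v * w) (v * w)

/-- bitwise XOR of 0/1 integer vectors, re-embedded as a 0/1 integer vector. -/
def vxor (v w : ι → ℤ) : ι → ℤ := fun i => v i + w i - 2 * (v i * w i)

/-- ξ_k = exp(2πi/2^k). -/
def xi (k : ℕ) : ℂ := Complex.exp (2 * Real.pi * Complex.I / 2 ^ k)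

/-- τ_R^{(k)} = diag(ξ^{v R vᵀ mod 2^k}), indexed by v ∈ {0,1}^m. -/
def tau (k : ℕ) (R : Matrix ι ι ℤ) : Matrix (ι → ZMod 2) (ι → ZMod 2) ℂ :=
  Matrix.diagonal fun v => xi k ^ (bil R (toZ v) (toZ v) % 2 ^ k)

/-- The Hermitian Pauli matrix E(a,b) extended to integer-vector arguments:
    E(a,b) e_v = i^{a·b mod 4} (−1)^{v·b} e_{v ⊕ a₀}. -/
def EMat (a b : ι → ℤ) : Matrix (ι → ZMod 2) (ι → ZMod 2) ℂ :=
  Matrix.of fun u v =>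
    if u = v + red2 a then Complex.I ^ (dotZ a b % 4) * (-1 : ℂ) ^ dotZ (toZ v) b else 0

/-- 0th binary digit vector of a (componentwise `mod 2`). -/
def dig0 (a : ι → ℤ) : ι → ℤ := fun i => a i % 2

/-- 1st binary digit vector of a. -/
def dig1 (a : ι → ℤ) : ι → ℤ := fun i => (a i / 2) % 2

/-- q^{(k−1)}(v; R, a, b). -/
def qfun (k : ℕ) (R : Matrix ι ι ℤ) (a b v : ι → ℤ) : ℤ :=
  (1 - 2 ^ (k - 2)) * bil R (dig0 a) (dig0 a)
    + 2 ^ (k - 1) * (dotZ (dig0 a) (dig1 b) + dotZ (dig0 b) (dig1 a))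
    + (2 + 2 ^ (k - 1)) * bil R v (dig0 a) - 4 * eta R v (dig0 a)

end

/-! Writing `v + w - v ∗ w = (1 - w) ∗ v + w` splits `η(v; R, w)` into `((1 - w) ∗ v) R (w ∗ v)ᵀ`,
which is the `D_{w̄} R D_w` term, and `w R (w ∗ v)ᵀ = (w R D_w) · v`, which is the diagonal term
because `v ∗ v = v`. Symmetry of `R` exchanges `D_{w̄} R D_w` and `D_w R D_{w̄}` in the quadratic form. -/

section

variable {ι : Type*} [Fintype ι]

lemma bil_eq_dotProduct_mulVec (R : Matrix ι ι ℤ) (x y : ι → ℤ) : bil R x y = x ⬝ᵥ R *ᵥ y := by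
  simp only [bil, dotProduct, mulVec, Finset.mul_sum, mul_assoc]

lemma bil_add_matrix (A B : Matrix ι ι ℤ) (x y : ι → ℤ) :
    bil (A + B) x y = bil A x y + bil B x y := by
  simp only [bil_eq_dotProduct_mulVec, add_mulVec, dotProduct_add]

lemma bil_add_left (R : Matrix ι ι ℤ) (x x' y : ι → ℤ) :
    bil R (x + x') y = bil R x y + bil R x' y := by
  simp only [bil_eq_dotProduct_mulVec, add_dotProduct]

lemma bil_comm_of_isSymm {R : Matrix ι ι ℤ} (hR : R.IsSymm) (x y : ι → ℤ) :
    bil R x y = bil R y x := by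
  rw [bil_eq_dotProduct_mulVec, bil_eq_dotProduct_mulVec, dotProduct_mulVec, dotProduct_comm,
    ← vecMul_transpose, hR.eq]

lemma eta_eq_bil_add_bil (R : Matrix ι ι ℤ) (v w : ι → ℤ) :
    eta R v w = bil R ((1 - w) * v) (w * v) + bil R w (w * v) := by
  rw [eta, ← bil_add_left, mul_comm v w]
  congr 1
  ring

variable [DecidableEq ι]

lemma bil_diagonal_mul_mul_diagonal (a b : ι → ℤ) (R : Matrix ι ι ℤ) (x y : ι → ℤ) :
    bil (diagonal a * R * diagonal b) x y = bil R (a * x) (b * y) := by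
  simp only [bil, mul_diagonal, diagonal_mul, Pi.mul_apply]
  refine Finset.sum_congr rfl fun i _ => Finset.sum_congr rfl fun j _ => ?_
  ring

lemma bil_diagonal_self_of_mul_self {x : ι → ℤ} (hx : x * x = x) (d : ι → ℤ) :
    bil (diagonal d) x x = d ⬝ᵥ x := by
  simp only [bil, diagonal_apply, mul_ite, ite_mul, mul_zero, zero_mul, Finset.sum_ite_eq,
    Finset.mem_univ, if_true, dotProduct]
  refine Finset.sum_congr rfl fun i _ => ?_
  have hxi : x i * x i = x i := congrFun hx i
  linear_combination d i * hxi

lemma bil_self_mul_right (R : Matrix ι ι ℤ) (w v : ι → ℤ) :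
    bil R w (w * v) = w ᵥ* (R * diagonal w) ⬝ᵥ v := by
  rw [bil_eq_dotProduct_mulVec, dotProduct_mulVec, ← vecMul_vecMul]
  simp only [dotProduct, vecMul_diagonal, Pi.mul_apply, mul_assoc]

end

theorem stmt1_general {m : ℕ}
    (R : Matrix (Fin m) (Fin m) ℤ) (hR : R.IsSymm)
    (v w : Fin m → ℤ) (hv : ∀ i, v i = 0 ∨ v i = 1) :
    eta R v w
        = bil (Matrix.diagonal (fun i => 1 - w i) * R * Matrix.diagonal w
            + Matrix.diagonal (Matrix.vecMul w (R * Matrix.diagonal w))) v v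
    ∧ eta R v w
        = bil (Matrix.diagonal w * R * Matrix.diagonal (fun i => 1 - w i)
            + Matrix.diagonal (Matrix.vecMul w (R * Matrix.diagonal w))) v v := by
  have hvv : v * v = v := funext fun i => by rcases hv i with h | h <;> simp [h]
  have swap : bil (diagonal w * R * diagonal (fun i => 1 - w i)) v v
      = bil (diagonal (fun i => 1 - w i) * R * diagonal w) v v := by
    rw [bil_diagonal_mul_mul_diagonal, bil_diagonal_mul_mul_diagonal, bil_comm_of_isSymm hR]
  rw [bil_add_matrix, bil_add_matrix, swap, and_self, bil_diagonal_mul_mul_diagonal,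
    bil_diagonal_self_of_mul_self hvv, eta_eq_bil_add_bil, bil_self_mul_right]
  rfl

theorem stmt1 {m : ℕ} (hm : 1 ≤ m)
    (R : Matrix (Fin m) (Fin m) ℤ) (hR : R.IsSymm)
    (v w : Fin m → ℤ) (hv : ∀ i, v i = 0 ∨ v i = 1) (hw : ∀ i, w i = 0 ∨ w i = 1) :
    eta R v w
        = bil (Matrix.diagonal (fun i => 1 - w i) * R * Matrix.diagonal w
            + Matrix.diagonal (Matrix.vecMul w (R * Matrix.diagonal w))) v v
    ∧ eta R v w
        = bil (Matrix.diagonal w * R * Matrix.diagonal (fun i => 1 - w i)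
            + Matrix.diagonal (Matrix.vecMul w (R * Matrix.diagonal w))) v v :=
  stmt1_general R hR v w hv

end CliffordHierarchy
end

section
/- Let k ≥ 1, ξ_k = exp(2πi/2^k), and let α, β, γ be integers. Then there exists a symmetric 2×2 integer matrix R such that the 4×4 diagonal matrix diag(1, ξ_k^α, ξ_k^β, ξ_k^γ) (indexed by (v_1,v_2) ∈ {0,1}^2 in the order 00, 01, 10, 11) equals τ_R^{(k+1)}, where τ_R^{(k+1)} := diag(ξ_{k+1}^{v R v^T mod 2^{k+1}}) with ξ_{k+1} = exp(2πi/2^{k+1}). In particular, every two-qubit diagonal unitary whose diagonal entries are 2^k-th roots of unity with first entry 1 is of the form τ_R^{(ℓ)} for ℓ = k+1. -/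
open Complex Matrix

namespace CliffordHierarchy

noncomputable section

variable {ι : Type*} [Fintype ι] [DecidableEq ι]

/-! Since `ξ_{k+1}² = ξ_k`, the target entries are `ξ_{k+1}` raised to `0, 2α, 2β, 2γ`.
For a symmetric 2×2 matrix the form `v R vᵀ` at `v = 00, 01, 10, 11` takes the values
`0, R₁₁, R₀₀, R₀₀ + R₁₁ + 2 R₀₁`, so `R = [[2β, γ-α-β], [γ-α-β, 2α]]` matches them exactly;
the reduction mod `2^{k+1}` in `τ` is invisible because `ξ_{k+1}` has order `2^{k+1}`. -/

lemma xi_ne_zero (k : ℕ) : xi k ≠ 0 :=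
  exp_ne_zero _

lemma xi_zpow_two_pow (k : ℕ) : xi k ^ (2 ^ k : ℤ) = 1 := by
  simpa [xi] using (isPrimitiveRoot_exp (2 ^ k) (by positivity)).zpow_eq_one

lemma xi_zpow_emod_two_pow (k : ℕ) (n : ℤ) : xi k ^ (n % 2 ^ k) = xi k ^ n := by
  conv_rhs => rw [← Int.emod_add_mul_ediv n (2 ^ k)]
  rw [zpow_add₀ (xi_ne_zero k), _root_.zpow_mul, xi_zpow_two_pow, _root_.one_zpow, mul_one]

lemma xi_succ_sq (k : ℕ) : xi (k + 1) ^ 2 = xi k := by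
  rw [xi, xi, ← exp_nat_mul, pow_succ]
  congr 1
  field_simp
  push_cast
  ring

lemma xi_succ_zpow_two_mul (k : ℕ) (n : ℤ) : xi (k + 1) ^ (2 * n) = xi k ^ n := by
  rw [_root_.zpow_mul, zpow_two, ← sq, xi_succ_sq]

lemma bil_toZ_self_fin_two (R : Matrix (Fin 2) (Fin 2) ℤ) (v : Fin 2 → ZMod 2) :
    bil R (toZ v) (toZ v) =
      R 0 0 * (v 0).val + R 1 1 * (v 1).val + (R 0 1 + R 1 0) * (v 0).val * (v 1).val := by
  have hval : ∀ x : ZMod 2, (x.val : ℤ) * x.val = x.val := by decide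
  simp only [bil, toZ, Fin.sum_univ_two]
  linear_combination R 0 0 * hval (v 0) + R 1 1 * hval (v 1)

theorem stmt9_general (k : ℕ) (α β γ : ℤ) :
    ∃ R : Matrix (Fin 2) (Fin 2) ℤ, R.IsSymm ∧
      Matrix.diagonal (fun v : Fin 2 → ZMod 2 =>
          if v 0 = 0 ∧ v 1 = 0 then 1
          else if v 0 = 0 ∧ v 1 = 1 then xi k ^ α
          else if v 0 = 1 ∧ v 1 = 0 then xi k ^ β
          else xi k ^ γ)
        = tau (k + 1) R := by
  refine ⟨!![2 * β, γ - α - β; γ - α - β, 2 * α], ?_, ?_⟩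
  · ext i j
    fin_cases i <;> fin_cases j <;> rfl
  refine congrArg diagonal (funext fun v => ?_)
  rw [xi_zpow_emod_two_pow, bil_toZ_self_fin_two]
  have hcases : ∀ x : ZMod 2, x = 0 ∨ x = 1 := by decide
  rcases hcases (v 0) with h0 | h0 <;> rcases hcases (v 1) with h1 | h1 <;>
    simp [h0, h1, ZMod.val_one]
  all_goals rw [← xi_succ_zpow_two_mul]
  congr 1
  ring

theorem stmt9 (k : ℕ) (hk : 1 ≤ k) (α β γ : ℤ) :
    ∃ R : Matrix (Fin 2) (Fin 2) ℤ, R.IsSymm ∧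
      Matrix.diagonal (fun v : Fin 2 → ZMod 2 =>
          if v 0 = 0 ∧ v 1 = 0 then 1
          else if v 0 = 0 ∧ v 1 = 1 then xi k ^ α
          else if v 0 = 1 ∧ v 1 = 0 then xi k ^ β
          else xi k ^ γ)
        = tau (k + 1) R :=
  stmt9_general k α β γ

end

end CliffordHierarchy
end

section
/- Let k ≥ 2, m ≥ 1, and let R be a symmetric m×m integer matrix. Let a, b, c, d ∈ ℤ_{≥0}^m with binary digit expansions a = a_0 + 2a_1 + …, b = b_0 + 2b_1 + …, c = c_0 + 2c_1 + …, d = d_0 + 2d_1 + …. Then for every v ∈ {0,1}^m: q^{(k−1)}(v ⊕ c_0; R, a, b) + q^{(k−1)}(v; R, c, d) ≡ q^{(k−1)}(v; R, a, b) + q^{(k−1)}(v ⊕ a_0; R, c, d) (mod 2^k). -/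
/-! Over ℤ the two sides differ by exactly `2^k (B(v ∗ a₀, c₀) − B(v ∗ c₀, a₀))`, where
`B(x, y) = x R yᵀ`. Writing `v ⊕ w = v + w − 2 v ∗ w`, the linear terms `B(v, ·)` of `q` contribute
twice this quantity and the `η` terms once, so `(2 + 2^{k−1}) · 2 − 4 = 2^k` times it survives.
Both contributions are polynomial identities in the entries once the `(i, j)` and `(j, i)`
summands of the double sums are paired, which is where the symmetry of `R` enters. -/

open Complex Matrix

namespace CliffordHierarchy

variable {ι : Type*} [Fintype ι]

theorem sum_sum_eq_zero_of_antisymm {M : Type*} [AddCommGroup M] [IsAddTorsionFree M]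
    {H : ι → ι → M} (hH : ∀ i j, H i j + H j i = 0) : ∑ i, ∑ j, H i j = 0 := by
  have hswap : ∑ i, ∑ j, H j i = ∑ i, ∑ j, H i j := Finset.sum_comm
  have hdouble : (2 : ℕ) • ∑ i, ∑ j, H i j = (2 : ℕ) • 0 := by
    rw [two_nsmul, smul_zero]
    nth_rewrite 2 [← hswap]
    simp only [← Finset.sum_add_distrib, hH, Finset.sum_const_zero]
  exact nsmul_right_injective two_ne_zero hdouble

section

variable {R : Matrix ι ι ℤ} (hR : R.IsSymm) (v A C : ι → ℤ)
include hR

theorem bil_vxor_sub :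
    bil R (vxor v C) A - bil R v A + (bil R v C - bil R (vxor v A) C)
      = 2 * (bil R (v * A) C - bil R (v * C) A) := by
  rw [← sub_eq_zero]
  simp only [bil, vxor, Pi.mul_apply, Finset.mul_sum, ← Finset.sum_sub_distrib,
    ← Finset.sum_add_distrib]
  refine sum_sum_eq_zero_of_antisymm fun i j => ?_
  rw [hR.apply i j]
  ring

theorem eta_vxor_sub :
    eta R (vxor v C) A - eta R v A + (eta R v C - eta R (vxor v A) C)
      = bil R (v * A) C - bil R (v * C) A := by
  rw [← sub_eq_zero]
  simp only [eta, bil, vxor, Pi.add_apply, Pi.sub_apply, Pi.mul_apply,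
    ← Finset.sum_sub_distrib, ← Finset.sum_add_distrib]
  refine sum_sum_eq_zero_of_antisymm fun i j => ?_
  rw [hR.apply i j]
  ring

theorem qfun_vxor_sub {k : ℕ} (hk : 1 ≤ k) (a b c d : ι → ℤ) :
    qfun k R a b (vxor v (dig0 c)) + qfun k R c d v
        - (qfun k R a b v + qfun k R c d (vxor v (dig0 a)))
      = 2 ^ k * (bil R (v * dig0 a) (dig0 c) - bil R (v * dig0 c) (dig0 a)) := by
  have hpow : (2 : ℤ) ^ k = 2 * 2 ^ (k - 1) := by
    rw [← pow_succ', Nat.sub_add_cancel hk]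
  unfold qfun
  linear_combination (2 + 2 ^ (k - 1)) * bil_vxor_sub hR v (dig0 a) (dig0 c)
    - 4 * eta_vxor_sub hR v (dig0 a) (dig0 c)
    - (bil R (v * dig0 a) (dig0 c) - bil R (v * dig0 c) (dig0 a)) * hpow

end

theorem stmt13_general {m k : ℕ} (hk : 2 ≤ k)
    (R : Matrix (Fin m) (Fin m) ℤ) (hR : R.IsSymm)
    (a b c d : Fin m → ℤ)
    (v : Fin m → ℤ) :
    qfun k R a b (vxor v (dig0 c)) + qfun k R c d v
      ≡ qfun k R a b v + qfun k R c d (vxor v (dig0 a)) [ZMOD (2 ^ k)] :=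
  (Int.modEq_iff_dvd.mpr ⟨_, qfun_vxor_sub hR v (by omega) a b c d⟩).symm

theorem stmt13 {m k : ℕ} (hm : 1 ≤ m) (hk : 2 ≤ k)
    (R : Matrix (Fin m) (Fin m) ℤ) (hR : R.IsSymm)
    (a b c d : Fin m → ℤ)
    (ha : ∀ i, 0 ≤ a i) (hb : ∀ i, 0 ≤ b i) (hc : ∀ i, 0 ≤ c i) (hd : ∀ i, 0 ≤ d i)
    (v : Fin m → ℤ) (hv : ∀ i, v i = 0 ∨ v i = 1) :
    qfun k R a b (vxor v (dig0 c)) + qfun k R c d v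
      ≡ qfun k R a b v + qfun k R c d (vxor v (dig0 a)) [ZMOD (2 ^ k)] :=
  stmt13_general hk R hR a b c d v

end CliffordHierarchy
end

section
/- Let k ≥ 2, m ≥ 1, ξ = exp(2πi/2^k), and let R be a symmetric m×m integer matrix. Let a, b, c, d ∈ ℤ_{≥0}^m with mod-2 reductions a_0, b_0, c_0, d_0 ∈ {0,1}^m, and let e, f ∈ ℤ_{≥0}^m with mod-2 reductions e_0, f_0 satisfying a_0 · d_0 + b_0 · c_0 ≡ a_0 · f_0 + e_0 · c_0 (mod 2). Then [τ_R^{(k)} E(c,d) (τ_R^{(k)})^†] · [τ_R^{(k)} E(a,b) (τ_R^{(k)})^†] = E(a_0,e) [τ_R^{(k)} E(c,d) (τ_R^{(k)})^†] E(a_0,e) · E(c_0,f) [τ_R^{(k)} E(a,b) (τ_R^{(k)})^†] E(c_0,f). In particular this holds for e = b_0 + a_0 R and f = d_0 + c_0 R. -/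
open Complex Matrix

namespace CliffordHierarchy

noncomputable section

variable {ι : Type*} [Fintype ι] [DecidableEq ι]

/-- The conjugation identity of Lemma (properties)(c), for given e, f. -/
def conjEq (k : ℕ) (R : Matrix ι ι ℤ) (a b c d e f : ι → ℤ) : Prop :=
  (tau k R * EMat c d * (tau k R)ᴴ) * (tau k R * EMat a b * (tau k R)ᴴ)
    = EMat (dig0 a) e * (tau k R * EMat c d * (tau k R)ᴴ) * EMat (dig0 a) e
        * (EMat (dig0 c) f * (tau k R * EMat a b * (tau k R)ᴴ) * EMat (dig0 c) f)


end

/-!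
Every matrix involved is monomial over `(ℤ/2)^m`: `E(a,b)` sends `e_v` to a multiple of
`e_{v+a₀}`, with a phase whose dependence on `v` is the character `(-1)^{v·b}`, and conjugating by
the diagonal unitary `τ` keeps the shift while multiplying the phase by `τ(v+a₀) τ(v)⁻¹`.
Conjugating a monomial matrix of shift `q` by the involution `E(a₀,e)` translates its phase by `a₀`
and multiplies it by `(-1)^{q·e}`. Hence both sides are monomial with shift `a₀ + c₀`; the
`τ`-factors telescope to `τ(v+a₀+c₀) τ(v)⁻¹` on both sides, and the remaining signs differ by
`(-1)^{a₀·d + c₀·b + a₀·f + c₀·e}`, which is `1` by the parity hypothesis. For `e = b₀ + a₀R`,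
`f = d₀ + c₀R` the parity condition holds because `a₀ R c₀ᵀ = c₀ R a₀ᵀ` for symmetric `R`.
-/

section ShiftMatrix

variable {G α : Type*} [AddCommGroup G] [DecidableEq G]

def shiftMatrix [Zero α] (p : G) (φ : G → α) : Matrix G G α :=
  Matrix.of fun u v => if u = v + p then φ v else 0

variable [Fintype G]

theorem shiftMatrix_mul_shiftMatrix [NonUnitalNonAssocSemiring α] (p q : G) (φ ψ : G → α) :
    shiftMatrix p φ * shiftMatrix q ψ = shiftMatrix (p + q) fun v => φ (v + q) * ψ v := by
  ext u v
  simp only [shiftMatrix, mul_apply, of_apply, ite_mul, zero_mul, mul_ite, mul_zero]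
  rw [Finset.sum_eq_single (v + q) (fun w _ hw => by simp [hw]) (by simp), add_assoc,
    add_comm q p]
  by_cases huv : u = v + (p + q) <;> simp [huv]

theorem shiftMatrix_mul_shiftMatrix_mul_self [NonUnitalNonAssocSemiring α] {p : G}
    (hp : p + p = 0) (q : G) (ε φ : G → α) :
    shiftMatrix p ε * shiftMatrix q φ * shiftMatrix p ε
      = shiftMatrix q fun v => ε (v + p + q) * φ (v + p) * ε v := by
  rw [shiftMatrix_mul_shiftMatrix, shiftMatrix_mul_shiftMatrix,
    show p + q + p = q by rw [add_right_comm, hp, zero_add]]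

theorem diagonal_mul_shiftMatrix_mul_conjTranspose [Semiring α] [StarRing α] (t : G → α)
    (p : G) (φ : G → α) :
    diagonal t * shiftMatrix p φ * (diagonal t)ᴴ
      = shiftMatrix p fun v => t (v + p) * φ v * star (t v) := by
  ext u v
  rw [diagonal_conjTranspose, mul_diagonal, diagonal_mul]
  by_cases huv : u = v + p <;> simp [shiftMatrix, huv]

end ShiftMatrix

theorem add_add_self {G : Type*} [AddCommGroup G] [Module (ZMod 2) G] (v p : G) :
    v + p + p = v := by
  rw [add_assoc, ZModModule.add_self, add_zero]

theorem neg_one_zpow_congr {K : Type*} [DivisionRing K] {m n : ℤ} (h : m ≡ n [ZMOD 2]) :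
    (-1 : K) ^ m = (-1) ^ n := by
  rw [← Int.cast_negOnePow, ← Int.cast_negOnePow,
    (Int.negOnePow_eq_iff m n).2 (even_iff_two_dvd.2 h.symm.dvd)]

theorem norm_xi (k : ℕ) : ‖xi k‖ = 1 := by
  rw [xi, show 2 * Real.pi * I / 2 ^ k = ((2 * Real.pi / 2 ^ k : ℝ) : ℂ) * I by push_cast; ring,
    norm_exp_ofReal_mul_I]

theorem star_xi_zpow_mul_self (k : ℕ) (n : ℤ) : star (xi k ^ n) * xi k ^ n = 1 := by
  have h := Complex.conj_mul' (xi k ^ n)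
  rwa [norm_zpow, norm_xi, _root_.one_zpow, ofReal_one, one_pow, starRingEnd_apply] at h

section Parity

variable {ι : Type*}

theorem dotZ_comm [Fintype ι] (x y : ι → ℤ) : dotZ x y = dotZ y x :=
  dotProduct_comm x y

theorem toZ_red2 (a : ι → ℤ) : toZ (red2 a) = dig0 a := by
  funext i
  simp only [toZ, red2, dig0, ZMod.val_intCast]
  norm_num

theorem red2_toZ (p : ι → ZMod 2) : red2 (toZ p) = p := by
  funext i
  simp [red2, toZ]

theorem intCast_dotZ [Fintype ι] {S : Type*} [Ring S] (x y : ι → ℤ) :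
    (dotZ x y : S) = ∑ i, (x i : S) * y i := by
  simp [dotZ]

theorem dotZ_toZ_add_modEq [Fintype ι] (v w : ι → ZMod 2) (b : ι → ℤ) :
    dotZ (toZ (v + w)) b ≡ dotZ (toZ v) b + dotZ (toZ w) b [ZMOD 2] := by
  refine (ZMod.intCast_eq_intCast_iff _ _ 2).1 ?_
  simp [intCast_dotZ, toZ, add_mul, Finset.sum_add_distrib]

theorem dotZ_dig0_right_modEq [Fintype ι] (x t : ι → ℤ) :
    dotZ x (dig0 t) ≡ dotZ x t [ZMOD 2] := by
  refine (ZMod.intCast_eq_intCast_iff _ _ 2).1 ?_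
  have hmod (z : ℤ) : ((z % 2 : ℤ) : ZMod 2) = z := by simpa using ZMod.intCast_mod z 2
  simp [intCast_dotZ, dig0, hmod]

end Parity

section Pauli

variable {ι : Type*} [Fintype ι]

theorem EMat_eq_shiftMatrix (a b : ι → ℤ) :
    EMat a b = shiftMatrix (red2 a) fun v => I ^ (dotZ a b % 4) * (-1) ^ dotZ (toZ v) b :=
  rfl

theorem neg_one_zpow_dotZ_toZ_add (v w : ι → ZMod 2) (b : ι → ℤ) :
    (-1 : ℂ) ^ dotZ (toZ (v + w)) b = (-1) ^ dotZ (toZ v) b * (-1) ^ dotZ (toZ w) b := by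
  rw [← zpow_add₀ (by norm_num), neg_one_zpow_congr (dotZ_toZ_add_modEq v w b)]

theorem neg_one_zpow_mul_self (n : ℤ) : (-1 : ℂ) ^ n * (-1) ^ n = 1 := by
  rw [← mul_zpow, neg_one_mul, neg_neg, _root_.one_zpow]

theorem I_zpow_emod_four_mul_self (n : ℤ) : I ^ (n % 4) * I ^ (n % 4) = (-1) ^ n := by
  rw [← zpow_add₀ I_ne_zero, ← two_mul, _root_.zpow_mul, zpow_two, I_mul_I]
  exact neg_one_zpow_congr (Int.emod_emod_of_dvd n (by norm_num))

theorem EMat_toZ_mul_shiftMatrix_mul_EMat_toZ [DecidableEq ι] (p q : ι → ZMod 2) (e : ι → ℤ)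
    (φ : (ι → ZMod 2) → ℂ) :
    EMat (toZ p) e * shiftMatrix q φ * EMat (toZ p) e
      = shiftMatrix q fun v => (-1) ^ dotZ (toZ q) e * φ (v + p) := by
  rw [EMat_eq_shiftMatrix, red2_toZ,
    shiftMatrix_mul_shiftMatrix_mul_self (ZModModule.add_self p)]
  congr 1
  funext v
  have hI := I_zpow_emod_four_mul_self (dotZ (toZ p) e)
  have hv := neg_one_zpow_mul_self (dotZ (toZ v) e)
  have hp := neg_one_zpow_mul_self (dotZ (toZ p) e)
  rw [neg_one_zpow_dotZ_toZ_add, neg_one_zpow_dotZ_toZ_add]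
  grind

end Pauli

theorem conjEq_of_modEq {ι : Type*} [Fintype ι] [DecidableEq ι] (k : ℕ) (R : Matrix ι ι ℤ)
    (a b c d e f : ι → ℤ)
    (hpar : dotZ (dig0 a) (dig0 d) + dotZ (dig0 b) (dig0 c)
      ≡ dotZ (dig0 a) (dig0 f) + dotZ (dig0 e) (dig0 c) [ZMOD 2]) :
    conjEq k R a b c d e f := by
  have hsign : (-1 : ℂ) ^ dotZ (dig0 a) d
      = (-1) ^ dotZ (dig0 c) e * (-1) ^ dotZ (dig0 a) f * (-1) ^ dotZ (dig0 c) b := by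
    rw [← zpow_add₀ (by norm_num), ← zpow_add₀ (by norm_num)]
    refine neg_one_zpow_congr ?_
    have had := dotZ_dig0_right_modEq (dig0 a) d
    have haf := dotZ_dig0_right_modEq (dig0 a) f
    have hcb := dotZ_dig0_right_modEq (dig0 c) b
    have hce := dotZ_dig0_right_modEq (dig0 c) e
    rw [dotZ_comm (dig0 b), dotZ_comm (dig0 e)] at hpar
    simp only [Int.ModEq] at *
    omega
  rw [conjEq, tau, EMat_eq_shiftMatrix a b, EMat_eq_shiftMatrix c d,
    diagonal_mul_shiftMatrix_mul_conjTranspose, diagonal_mul_shiftMatrix_mul_conjTranspose,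
    ← toZ_red2 a, ← toZ_red2 c, EMat_toZ_mul_shiftMatrix_mul_EMat_toZ,
    EMat_toZ_mul_shiftMatrix_mul_EMat_toZ, shiftMatrix_mul_shiftMatrix,
    shiftMatrix_mul_shiftMatrix]
  congr 1
  funext v
  simp only [add_add_self, add_right_comm v (red2 c), neg_one_zpow_dotZ_toZ_add,
    toZ_red2, hsign]
  -- the `τ`-factors telescope to `τ (v + a₀ + c₀) * star (τ v)` on both sides
  have ha := star_xi_zpow_mul_self k (bil R (toZ (v + red2 a)) (toZ (v + red2 a)) % 2 ^ k)
  have hc := star_xi_zpow_mul_self k (bil R (toZ (v + red2 c)) (toZ (v + red2 c)) % 2 ^ k)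
  grind

theorem dotZ_dig0_add_vecMul_modEq {ι : Type*} [Fintype ι] {R : Matrix ι ι ℤ} (hR : R.IsSymm)
    (x y u w : ι → ℤ) :
    dotZ x u + dotZ y w ≡ dotZ x (dig0 (u + w ᵥ* R)) + dotZ (dig0 (y + x ᵥ* R)) w [ZMOD 2] := by
  have hsymm : dotZ x (w ᵥ* R) = dotZ (x ᵥ* R) w := by
    change x ⬝ᵥ (w ᵥ* R) = (x ᵥ* R) ⬝ᵥ w
    rw [← dotProduct_mulVec, ← vecMul_transpose, hR.eq]
  have hu := dotZ_dig0_right_modEq x (u + w ᵥ* R)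
  have hy := dotZ_dig0_right_modEq w (y + x ᵥ* R)
  rw [dotZ_comm w, dotZ_comm w] at hy
  simp only [dotZ, Pi.add_apply, mul_add, add_mul, Finset.sum_add_distrib] at hu hy hsymm ⊢
  simp only [Int.ModEq] at *
  omega

theorem stmt15_general {m k : ℕ}
    (R : Matrix (Fin m) (Fin m) ℤ) (hR : R.IsSymm)
    (a b c d : Fin m → ℤ) :
    (∀ e f : Fin m → ℤ, (∀ i, 0 ≤ e i) → (∀ i, 0 ≤ f i) →
        dotZ (dig0 a) (dig0 d) + dotZ (dig0 b) (dig0 c)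
          ≡ dotZ (dig0 a) (dig0 f) + dotZ (dig0 e) (dig0 c) [ZMOD 2] →
        conjEq k R a b c d e f)
    ∧ conjEq k R a b c d (dig0 b + Matrix.vecMul (dig0 a) R)
        (dig0 d + Matrix.vecMul (dig0 c) R) :=
  ⟨fun e f _ _ => conjEq_of_modEq k R a b c d e f,
    conjEq_of_modEq k R a b c d _ _ (dotZ_dig0_add_vecMul_modEq hR _ _ _ _)⟩

theorem stmt15 {m k : ℕ} (hm : 1 ≤ m) (hk : 2 ≤ k)
    (R : Matrix (Fin m) (Fin m) ℤ) (hR : R.IsSymm)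
    (a b c d : Fin m → ℤ)
    (ha : ∀ i, 0 ≤ a i) (hb : ∀ i, 0 ≤ b i) (hc : ∀ i, 0 ≤ c i) (hd : ∀ i, 0 ≤ d i) :
    (∀ e f : Fin m → ℤ, (∀ i, 0 ≤ e i) → (∀ i, 0 ≤ f i) →
        dotZ (dig0 a) (dig0 d) + dotZ (dig0 b) (dig0 c)
          ≡ dotZ (dig0 a) (dig0 f) + dotZ (dig0 e) (dig0 c) [ZMOD 2] →
        conjEq k R a b c d e f)
    ∧ conjEq k R a b c d (dig0 b + Matrix.vecMul (dig0 a) R)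
        (dig0 d + Matrix.vecMul (dig0 c) R) :=
  stmt15_general R hR a b c d

end CliffordHierarchy
end
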